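/- arXiv:2204.09587 — 2 statements merged into one kernel-verified Lean document; each statement's English description precedes it below -/
import Mathlib

section
/- Let 0 < θ₀ < θ₁ and c ∈ ℝ, and let (D₁*, D₂*, P₀*) = (θ₁^{3/2} − θ₀^{3/2}, θ₀^{3/2}, (θ₁^{3/2} − θ₀^{3/2})/(3(θ₁^{1/2} − θ₀^{1/2}))). Then the Jacobian determinant of the map (D₁, D₂, P₀) ↦ (F₁, F₂, F₃)(0; D₁, D₂, P₀) evaluated at (D₁*, D₂*, P₀*) has absolute value (4/9) θ₀^{−1/2} θ₁^{−1/2} (P₀*)^{−1}; in particular it is nonzero. -/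
open Real

/-- `F₁(ε; D₁, D₂, P₀) = D₂^{2/3} − θ₀ − (2c/(3P₀)) ε D₁ D₂^{1/3}`. -/
noncomputable def F1 (θ₀ c ε D₁ D₂ P₀ : ℝ) : ℝ :=
  D₂ ^ ((2 : ℝ)/3) - θ₀ - (2 * c / (3 * P₀)) * ε * D₁ * D₂ ^ ((1 : ℝ)/3)

/-- `F₂(ε; D₁, D₂, P₀) = (D₁+D₂)^{2/3} − θ₁ + (2c/(3P₀)) ε D₁ (D₁+D₂)^{1/3}`. -/
noncomputable def F2 (θ₁ c ε D₁ D₂ P₀ : ℝ) : ℝ :=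
  (D₁ + D₂) ^ ((2 : ℝ)/3) - θ₁ + (2 * c / (3 * P₀)) * ε * D₁ * (D₁ + D₂) ^ ((1 : ℝ)/3)

/-- `F₃(ε; D₁, D₂, P₀) = (3P₀/D₁)((D₁+D₂)^{1/3} − D₂^{1/3}) − 1`. -/
noncomputable def F3 (D₁ D₂ P₀ : ℝ) : ℝ :=
  (3 * P₀ / D₁) * ((D₁ + D₂) ^ ((1 : ℝ)/3) - D₂ ^ ((1 : ℝ)/3)) - 1

/-- The map `(D₁, D₂, P₀) ↦ (F₁, F₂, F₃)(0; D₁, D₂, P₀)`. -/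
noncomputable def Fmap (θ₀ θ₁ c : ℝ) (d : Fin 3 → ℝ) : Fin 3 → ℝ :=
  ![F1 θ₀ c 0 (d 0) (d 1) (d 2), F2 θ₁ c 0 (d 0) (d 1) (d 2), F3 (d 0) (d 1) (d 2)]

/-!
At `ε = 0` neither `F₁` nor `F₂` depends on `P₀`, and `F₁` does not depend on `D₁`, so the
Jacobian matrix has zeros at (1,1), (1,3), (2,3) and its determinant is
`-∂F₁/∂D₂ · ∂F₂/∂D₁ · ∂F₃/∂P₀ = -(4/9) D₂^{-1/3} (D₁+D₂)^{-1/3} · (3/D₁)((D₁+D₂)^{1/3} - D₂^{1/3})`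
at any admissible point. Writing `a = θ₀^{1/2}`, `b = θ₁^{1/2}`, the given point is
`(b³ - a³, a³, P₀*)`, where the cube roots are `a` and `b` and `(3/D₁)(b - a) = 1/P₀*`.
-/

theorem Matrix.det_fin_three_of_eq_zero {R : Type*} [CommRing R] (A : Matrix (Fin 3) (Fin 3) R)
    (h₀₀ : A 0 0 = 0) (h₀₂ : A 0 2 = 0) (h₁₂ : A 1 2 = 0) :
    A.det = -(A 0 1 * A 1 0 * A 2 2) := by
  rw [Matrix.det_fin_three, h₀₀, h₀₂, h₁₂]
  ring

theorem LinearMap.toMatrix'_fderiv_apply {𝕜 ι : Type*} [NontriviallyNormedField 𝕜] [Fintype ι]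
    [DecidableEq ι] {F : (ι → 𝕜) → ι → 𝕜} {x : ι → 𝕜} (hF : DifferentiableAt 𝕜 F x) (i j : ι) :
    LinearMap.toMatrix' (fderiv 𝕜 F x : (ι → 𝕜) →ₗ[𝕜] ι → 𝕜) i j =
      lineDeriv 𝕜 (fun y => F y i) x (Pi.single j 1) := by
  rw [LinearMap.toMatrix'_apply, ContinuousLinearMap.coe_coe,
    (differentiableAt_pi.1 hF i).lineDeriv_eq_fderiv,
    (hasFDerivAt_pi'.1 hF.hasFDerivAt i).fderiv]
  rfl

theorem Real.pow_rpow_div_natCast {y : ℝ} (hy : 0 ≤ y) {n : ℕ} (hn : n ≠ 0) (p : ℝ) :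
    (y ^ n) ^ (p / n) = y ^ p := by
  rw [← rpow_natCast_mul hy, mul_div_cancel₀ _ (Nat.cast_ne_zero.2 hn)]

theorem Real.rpow_three_halves {θ : ℝ} (hθ : 0 ≤ θ) :
    θ ^ ((3 : ℝ) / 2) = (θ ^ ((1 : ℝ) / 2)) ^ 3 := by
  rw [← rpow_mul_natCast hθ]
  norm_num

theorem lineDeriv_eq_zero_of_forall_add_smul {𝕜 E F : Type*} [NontriviallyNormedField 𝕜]
    [NormedAddCommGroup F] [NormedSpace 𝕜 F] [AddCommGroup E] [Module 𝕜 E] {f : E → F} {x v : E}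
    (hf : ∀ t : 𝕜, f (x + t • v) = f x) : lineDeriv 𝕜 f x v = 0 := by
  simp only [lineDeriv, hf, deriv_const]

@[simp]
theorem F1_zero (θ₀ c D₁ D₂ P₀ : ℝ) : F1 θ₀ c 0 D₁ D₂ P₀ = D₂ ^ ((2 : ℝ) / 3) - θ₀ := by
  simp [F1]

@[simp]
theorem F2_zero (θ₁ c D₁ D₂ P₀ : ℝ) :
    F2 θ₁ c 0 D₁ D₂ P₀ = (D₁ + D₂) ^ ((2 : ℝ) / 3) - θ₁ := by
  simp [F2]

section Jacobian

variable {θ₀ θ₁ c : ℝ} {x : Fin 3 → ℝ}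

theorem differentiableAt_Fmap (h₀ : x 0 ≠ 0) (h₁ : x 1 ≠ 0) (h₀₁ : x 0 + x 1 ≠ 0) :
    DifferentiableAt ℝ (Fmap θ₀ θ₁ c) x := by
  rw [differentiableAt_pi]
  intro i
  fin_cases i <;> simp [Fmap, F3] <;> fun_prop (disch := assumption)

theorem det_fderiv_Fmap (h₀ : x 0 ≠ 0) (h₁ : 0 < x 1) (h₀₁ : 0 < x 0 + x 1) :
    LinearMap.det (fderiv ℝ (Fmap θ₀ θ₁ c) x : (Fin 3 → ℝ) →ₗ[ℝ] Fin 3 → ℝ) =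
      -(2 / 3 * x 1 ^ (-(1 : ℝ) / 3) * (2 / 3 * (x 0 + x 1) ^ (-(1 : ℝ) / 3)) *
        (3 / x 0 * ((x 0 + x 1) ^ ((1 : ℝ) / 3) - x 1 ^ ((1 : ℝ) / 3)))) := by
  have hM := LinearMap.toMatrix'_fderiv_apply
    (differentiableAt_Fmap (θ₀ := θ₀) (θ₁ := θ₁) (c := c) h₀ h₁.ne' h₀₁.ne')
  have j₀₀ : lineDeriv ℝ (Fmap θ₀ θ₁ c · 0) x (Pi.single 0 1) = 0 :=
    lineDeriv_eq_zero_of_forall_add_smul fun t => by simp [Fmap]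
  have j₀₂ : lineDeriv ℝ (Fmap θ₀ θ₁ c · 0) x (Pi.single 2 1) = 0 :=
    lineDeriv_eq_zero_of_forall_add_smul fun t => by simp [Fmap]
  have j₁₂ : lineDeriv ℝ (Fmap θ₀ θ₁ c · 1) x (Pi.single 2 1) = 0 :=
    lineDeriv_eq_zero_of_forall_add_smul fun t => by simp [Fmap]
  have j₀₁ : HasLineDerivAt ℝ (Fmap θ₀ θ₁ c · 0) (2 / 3 * x 1 ^ (-(1 : ℝ) / 3)) x
      (Pi.single 1 1) := by
    have h := (((hasDerivAt_id (0 : ℝ)).const_add (x 1)).rpow_const (p := 2 / 3)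
      (by simp [h₁.ne'])).sub_const θ₀
    simp only [HasLineDerivAt, Fmap]
    convert h using 1 <;> norm_num
  have j₁₀ : HasLineDerivAt ℝ (Fmap θ₀ θ₁ c · 1) (2 / 3 * (x 0 + x 1) ^ (-(1 : ℝ) / 3)) x
      (Pi.single 0 1) := by
    have h := (((hasDerivAt_id (0 : ℝ)).const_add (x 0)).add_const (x 1) |>.rpow_const
      (p := 2 / 3) (by simp [h₀₁.ne'])).sub_const θ₁
    simp only [HasLineDerivAt, Fmap]
    convert h using 1 <;> norm_num
  have j₂₂ : HasLineDerivAt ℝ (Fmap θ₀ θ₁ c · 2)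
      (3 / x 0 * ((x 0 + x 1) ^ ((1 : ℝ) / 3) - x 1 ^ ((1 : ℝ) / 3))) x (Pi.single 2 1) := by
    have h := ((((hasDerivAt_id (0 : ℝ)).const_add (x 2)).const_mul 3).div_const (x 0) |>.mul_const
      ((x 0 + x 1) ^ ((1 : ℝ) / 3) - x 1 ^ ((1 : ℝ) / 3))).sub_const 1
    simp only [HasLineDerivAt, Fmap]
    convert h using 1 <;> simp [F3]
  rw [← LinearMap.det_toMatrix', Matrix.det_fin_three_of_eq_zero _ (by rw [hM, j₀₀])
    (by rw [hM, j₀₂]) (by rw [hM, j₁₂]), hM, hM, hM, j₀₁.lineDeriv, j₁₀.lineDeriv, j₂₂.lineDeriv]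

theorem det_fderiv_Fmap_cubes {a b : ℝ} (ha : 0 < a) (hab : a < b) :
    LinearMap.det (fderiv ℝ (Fmap θ₀ θ₁ c)
        ![b ^ 3 - a ^ 3, a ^ 3, (b ^ 3 - a ^ 3) / (3 * (b - a))] : (Fin 3 → ℝ) →ₗ[ℝ] Fin 3 → ℝ) =
      -(4 / 9 * a⁻¹ * b⁻¹ * ((b ^ 3 - a ^ 3) / (3 * (b - a)))⁻¹) := by
  have hb : 0 < b := ha.trans hab
  have cube_rpow (y : ℝ) (hy : 0 < y) (p : ℝ) : (y ^ 3) ^ (p / 3) = y ^ p := by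
    exact_mod_cast Real.pow_rpow_div_natCast hy.le three_ne_zero p
  have hD₁ : b ^ 3 - a ^ 3 ≠ 0 := (sub_pos.2 (pow_lt_pow_left₀ hab ha.le three_ne_zero)).ne'
  rw [det_fderiv_Fmap (by simpa using hD₁) (by simpa using pow_pos ha 3)
    (by simpa using pow_pos hb 3)]
  simp only [Matrix.cons_val_zero, Matrix.cons_val_one, sub_add_cancel,
    cube_rpow a ha, cube_rpow b hb, rpow_neg_one, rpow_one, inv_div]
  ring

end Jacobian

/-- The Jacobian determinant of `(D₁,D₂,P₀) ↦ (F₁,F₂,F₃)(0;·)` at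
`(D₁*, D₂*, P₀*) = (θ₁^{3/2} − θ₀^{3/2}, θ₀^{3/2}, (θ₁^{3/2}−θ₀^{3/2})/(3(θ₁^{1/2}−θ₀^{1/2})))`
has absolute value `(4/9) θ₀^{−1/2} θ₁^{−1/2} (P₀*)⁻¹`; in particular it is nonzero. -/
theorem stmt1 (θ₀ θ₁ c : ℝ) (h0 : 0 < θ₀) (h01 : θ₀ < θ₁) :
    |LinearMap.det ((fderiv ℝ (Fmap θ₀ θ₁ c)
        ![θ₁ ^ ((3 : ℝ)/2) - θ₀ ^ ((3 : ℝ)/2), θ₀ ^ ((3 : ℝ)/2),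
          (θ₁ ^ ((3 : ℝ)/2) - θ₀ ^ ((3 : ℝ)/2)) /
            (3 * (θ₁ ^ ((1 : ℝ)/2) - θ₀ ^ ((1 : ℝ)/2)))]).toLinearMap)| =
      (4/9) * θ₀ ^ (-(1 : ℝ)/2) * θ₁ ^ (-(1 : ℝ)/2) *
        ((θ₁ ^ ((3 : ℝ)/2) - θ₀ ^ ((3 : ℝ)/2)) /
          (3 * (θ₁ ^ ((1 : ℝ)/2) - θ₀ ^ ((1 : ℝ)/2))))⁻¹ ∧
    LinearMap.det ((fderiv ℝ (Fmap θ₀ θ₁ c)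
        ![θ₁ ^ ((3 : ℝ)/2) - θ₀ ^ ((3 : ℝ)/2), θ₀ ^ ((3 : ℝ)/2),
          (θ₁ ^ ((3 : ℝ)/2) - θ₀ ^ ((3 : ℝ)/2)) /
            (3 * (θ₁ ^ ((1 : ℝ)/2) - θ₀ ^ ((1 : ℝ)/2)))]).toLinearMap) ≠ 0 := by
  have h₁ : 0 < θ₁ := h0.trans h01
  have half_neg (θ : ℝ) (hθ : 0 < θ) : θ ^ (-(1 : ℝ) / 2) = (θ ^ ((1 : ℝ) / 2))⁻¹ := by
    rw [neg_div, rpow_neg hθ.le]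
  rw [rpow_three_halves h0.le, rpow_three_halves h₁.le, half_neg θ₀ h0, half_neg θ₁ h₁]
  set a := θ₀ ^ ((1 : ℝ) / 2)
  set b := θ₁ ^ ((1 : ℝ) / 2)
  have ha : 0 < a := by positivity
  have hab : a < b := rpow_lt_rpow h0.le h01 (by norm_num)
  have hP : 0 < (b ^ 3 - a ^ 3) / (3 * (b - a)) :=
    div_pos (sub_pos.2 (pow_lt_pow_left₀ hab ha.le three_ne_zero)) (by linarith)
  have hdet : 0 < 4 / 9 * a⁻¹ * b⁻¹ * ((b ^ 3 - a ^ 3) / (3 * (b - a)))⁻¹ := by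
    have hb : 0 < b := ha.trans hab
    positivity
  rw [det_fderiv_Fmap_cubes ha hab, abs_neg, abs_of_pos hdet]
  exact ⟨rfl, neg_ne_zero.2 hdet.ne'⟩
end

section
/- Let 0 < θ₀ < θ₁ and c ∈ ℝ, and let (D₁*, D₂*, P₀*) = (θ₁^{3/2} − θ₀^{3/2}, θ₀^{3/2}, (θ₁^{3/2} − θ₀^{3/2})/(3(θ₁^{1/2} − θ₀^{1/2}))). There exist ε₀ > 0, an open neighborhood U ⊆ ℝ³ of (D₁*, D₂*, P₀*), and a C¹ (indeed smooth) map ε ↦ (D₁(ε), D₂(ε), P₀(ε)) on (−ε₀, ε₀) with (D₁(0), D₂(0), P₀(0)) = (D₁*, D₂*, P₀*), such that for every ε ∈ (−ε₀, ε₀) the point (D₁(ε), D₂(ε), P₀(ε)) is the unique point of U at which F₁(ε; ·) = F₂(ε; ·) = F₃(ε; ·) = 0. -/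
open Real Set

/-! ### Auxiliary explicit solution -/

noncomputable def ee (c ε : ℝ) : ℝ := 1 + 2*c*ε
noncomputable def inr (θ₀ θ₁ c ε : ℝ) : ℝ :=
  (θ₀+θ₁)^2 - (θ₁-θ₀)^2*(1+4*c*ε)/(ee c ε)^2
noncomputable def xx (θ₀ θ₁ c ε : ℝ) : ℝ := θ₀+θ₁ + Real.sqrt (inr θ₀ θ₁ c ε)
noncomputable def ss (θ₀ θ₁ c ε : ℝ) : ℝ := Real.sqrt (xx θ₀ θ₁ c ε)
noncomputable def dd (θ₀ θ₁ c ε : ℝ) : ℝ := (θ₁-θ₀)/(ss θ₀ θ₁ c ε * ee c ε)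
noncomputable def AA (θ₀ θ₁ c ε : ℝ) : ℝ := (ss θ₀ θ₁ c ε - dd θ₀ θ₁ c ε)/2
noncomputable def BB (θ₀ θ₁ c ε : ℝ) : ℝ := (ss θ₀ θ₁ c ε + dd θ₀ θ₁ c ε)/2
noncomputable def phi (θ₀ θ₁ c ε : ℝ) : ℝ × ℝ × ℝ :=
  (BB θ₀ θ₁ c ε ^ 3 - AA θ₀ θ₁ c ε ^ 3, AA θ₀ θ₁ c ε ^ 3,
    (AA θ₀ θ₁ c ε ^ 2 + AA θ₀ θ₁ c ε * BB θ₀ θ₁ c ε + BB θ₀ θ₁ c ε ^ 2)/3)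

/-! ### rpow facts -/

lemma cube_cubeRoot {x : ℝ} (hx : 0 ≤ x) : (x ^ ((1:ℝ)/3)) ^ 3 = x := by
  rw [← Real.rpow_natCast (x ^ ((1:ℝ)/3)) 3, ← Real.rpow_mul hx]
  try norm_num

lemma cubeRoot_cube {a : ℝ} (ha : 0 ≤ a) : (a ^ 3 : ℝ) ^ ((1:ℝ)/3) = a := by
  rw [← Real.rpow_natCast a 3, ← Real.rpow_mul ha]
  try norm_num

lemma twoThirds_sq {x : ℝ} (hx : 0 ≤ x) : x ^ ((2:ℝ)/3) = (x ^ ((1:ℝ)/3)) ^ 2 := by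
  rw [← Real.rpow_natCast (x ^ ((1:ℝ)/3)) 2, ← Real.rpow_mul hx]
  try norm_num

lemma threeHalves {x : ℝ} (hx : 0 ≤ x) : x ^ ((3:ℝ)/2) = Real.sqrt x ^ 3 := by
  rw [Real.sqrt_eq_rpow, ← Real.rpow_natCast (x ^ ((1:ℝ)/2)) 3, ← Real.rpow_mul hx]
  try norm_num

lemma half_sqrt {x : ℝ} : x ^ ((1:ℝ)/2) = Real.sqrt x := by
  rw [Real.sqrt_eq_rpow]

/-! ### smoothness -/

section smooth
variable {θ₀ θ₁ c ε : ℝ}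

lemma cd_ee : ContDiffAt ℝ (⊤ : ℕ∞) (ee c) ε := by
  unfold ee; exact contDiffAt_const.add (contDiffAt_const.mul contDiffAt_id)

lemma cd_inr (he : ee c ε ≠ 0) : ContDiffAt ℝ (⊤ : ℕ∞) (inr θ₀ θ₁ c) ε := by
  unfold inr
  exact contDiffAt_const.sub
    ((contDiffAt_const.mul (contDiffAt_const.add (contDiffAt_const.mul contDiffAt_id))).div
      (cd_ee.pow 2) (pow_ne_zero 2 he))

lemma xx_pos (hT : 0 < θ₀ + θ₁) : 0 < xx θ₀ θ₁ c ε := by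
  have := Real.sqrt_nonneg (inr θ₀ θ₁ c ε)
  unfold xx; linarith

lemma xx_gt (hT : 0 < θ₀ + θ₁) (hi : 0 < inr θ₀ θ₁ c ε) :
    θ₀ + θ₁ < xx θ₀ θ₁ c ε := by
  have := Real.sqrt_pos.2 hi; unfold xx; linarith

lemma ss_sq (hT : 0 < θ₀ + θ₁) : ss θ₀ θ₁ c ε ^ 2 = xx θ₀ θ₁ c ε :=
  Real.sq_sqrt (xx_pos hT).le

lemma ss_pos (hT : 0 < θ₀ + θ₁) : 0 < ss θ₀ θ₁ c ε :=
  Real.sqrt_pos.2 (xx_pos hT)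

lemma dd_pos (hT : 0 < θ₀ + θ₁) (h01 : θ₀ < θ₁) (he : 0 < ee c ε) :
    0 < dd θ₀ θ₁ c ε :=
  div_pos (by linarith) (mul_pos (ss_pos hT) he)

lemma cd_ss (hT : 0 < θ₀ + θ₁) (he : ee c ε ≠ 0) (hi : inr θ₀ θ₁ c ε ≠ 0) :
    ContDiffAt ℝ (⊤ : ℕ∞) (ss θ₀ θ₁ c) ε := by
  unfold ss
  have hx : ContDiffAt ℝ (⊤ : ℕ∞) (xx θ₀ θ₁ c) ε := by
    unfold xx; exact contDiffAt_const.add ((cd_inr he).sqrt hi)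
  exact hx.sqrt (xx_pos hT).ne'

lemma cd_dd (hT : 0 < θ₀ + θ₁) (he : ee c ε ≠ 0) (hi : inr θ₀ θ₁ c ε ≠ 0) :
    ContDiffAt ℝ (⊤ : ℕ∞) (dd θ₀ θ₁ c) ε := by
  unfold dd
  exact contDiffAt_const.div ((cd_ss hT he hi).mul cd_ee)
    (mul_ne_zero (ss_pos hT).ne' he)

lemma cd_AA (hT : 0 < θ₀ + θ₁) (he : ee c ε ≠ 0) (hi : inr θ₀ θ₁ c ε ≠ 0) :
    ContDiffAt ℝ (⊤ : ℕ∞) (AA θ₀ θ₁ c) ε := by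
  unfold AA; exact ((cd_ss hT he hi).sub (cd_dd hT he hi)).div_const 2

lemma cd_BB (hT : 0 < θ₀ + θ₁) (he : ee c ε ≠ 0) (hi : inr θ₀ θ₁ c ε ≠ 0) :
    ContDiffAt ℝ (⊤ : ℕ∞) (BB θ₀ θ₁ c) ε := by
  unfold BB; exact ((cd_ss hT he hi).add (cd_dd hT he hi)).div_const 2

lemma cd_phi (hT : 0 < θ₀ + θ₁) (he : ee c ε ≠ 0) (hi : inr θ₀ θ₁ c ε ≠ 0) :
    ContDiffAt ℝ (⊤ : ℕ∞) (phi θ₀ θ₁ c) ε := by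
  have hA := cd_AA (θ₀ := θ₀) (θ₁ := θ₁) hT he hi
  have hB := cd_BB (θ₀ := θ₀) (θ₁ := θ₁) hT he hi
  unfold phi
  exact ((hB.pow 3).sub (hA.pow 3)).prodMk
    ((hA.pow 3).prodMk ((((hA.pow 2).add (hA.mul hB)).add (hB.pow 2)).div_const 3))
end smooth

/-! ### the key algebraic equations -/

section alg
variable {θ₀ θ₁ c ε : ℝ}

lemma xx_key (hi : 0 < inr θ₀ θ₁ c ε) :
    (xx θ₀ θ₁ c ε - (θ₀+θ₁))^2 = inr θ₀ θ₁ c ε := by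
  have h1 : xx θ₀ θ₁ c ε - (θ₀+θ₁) = Real.sqrt (inr θ₀ θ₁ c ε) := by unfold xx; ring
  rw [h1, Real.sq_sqrt hi.le]

lemma main_eqs (hT : 0 < θ₀ + θ₁) (he : 0 < ee c ε)
    (hi : 0 < inr θ₀ θ₁ c ε) :
    AA θ₀ θ₁ c ε ^ 2 - θ₀ - 2*c*ε*(BB θ₀ θ₁ c ε - AA θ₀ θ₁ c ε)*AA θ₀ θ₁ c ε = 0 ∧
    BB θ₀ θ₁ c ε ^ 2 - θ₁ + 2*c*ε*(BB θ₀ θ₁ c ε - AA θ₀ θ₁ c ε)*BB θ₀ θ₁ c ε = 0 := by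
  have hsx := ss_sq (c := c) (ε := ε) hT
  have hspos := ss_pos (θ₁ := θ₁) (c := c) (ε := ε) hT
  have hxpos := xx_pos (θ₁ := θ₁) (c := c) (ε := ε) hT
  have hdd : dd θ₀ θ₁ c ε * (ss θ₀ θ₁ c ε * ee c ε) = θ₁ - θ₀ :=
    div_mul_cancel₀ _ (mul_ne_zero hspos.ne' he.ne')
  have hkey := xx_key (θ₀ := θ₀) (θ₁ := θ₁) (c := c) (ε := ε) hi
  have hkey' : (xx θ₀ θ₁ c ε - (θ₀+θ₁))^2 * (ee c ε)^2
      = (θ₀+θ₁)^2*(ee c ε)^2 - (θ₁-θ₀)^2*(1+4*c*ε) := by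
    rw [hkey]; unfold inr; field_simp
  have hd2 : dd θ₀ θ₁ c ε ^2 * (xx θ₀ θ₁ c ε * (ee c ε)^2) = (θ₁-θ₀)^2 := by
    linear_combination (dd θ₀ θ₁ c ε * ss θ₀ θ₁ c ε * ee c ε + (θ₁-θ₀)) * hdd
      - dd θ₀ θ₁ c ε ^2 * (ee c ε)^2 * hsx
  have eqS' : (ss θ₀ θ₁ c ε ^2 + dd θ₀ θ₁ c ε ^2*(1+4*c*ε)) * (xx θ₀ θ₁ c ε * (ee c ε)^2)
      = (2*(θ₀+θ₁)) * (xx θ₀ θ₁ c ε * (ee c ε)^2) := by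
    linear_combination hkey' + (1+4*c*ε)*hd2 + xx θ₀ θ₁ c ε * (ee c ε)^2 * hsx
  have eqS : ss θ₀ θ₁ c ε ^2 + dd θ₀ θ₁ c ε ^2*(1+4*c*ε) = 2*(θ₀+θ₁) :=
    mul_right_cancel₀ (mul_ne_zero hxpos.ne' (pow_ne_zero 2 he.ne')) eqS'
  simp only [ee] at hdd eqS
  constructor
  · unfold AA BB
    linear_combination (1/4)*eqS - (1/2)*hdd
  · unfold AA BB
    linear_combination (1/4)*eqS + (1/2)*hdd
end alg

/-! ### values at `ε = 0` -/

section zero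
variable {θ₀ θ₁ c : ℝ}

lemma ee_zero : ee c 0 = 1 := by unfold ee; ring

lemma inr_zero : inr θ₀ θ₁ c 0 = 4*θ₀*θ₁ := by
  unfold inr; rw [ee_zero]; ring

lemma AB_zero (h0 : 0 < θ₀) (h01 : θ₀ < θ₁) :
    AA θ₀ θ₁ c 0 = Real.sqrt θ₀ ∧ BB θ₀ θ₁ c 0 = Real.sqrt θ₁ := by
  set p := Real.sqrt θ₀ with hp
  set q := Real.sqrt θ₁ with hq
  have hp2 : p^2 = θ₀ := Real.sq_sqrt h0.le
  have hq2 : q^2 = θ₁ := Real.sq_sqrt (by linarith : (0:ℝ) ≤ θ₁)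
  have hppos : 0 < p := Real.sqrt_pos.2 h0
  have hqpos : 0 < q := Real.sqrt_pos.2 (by linarith)
  have hxz : xx θ₀ θ₁ c 0 = (p+q)^2 := by
    unfold xx
    rw [inr_zero, show 4*θ₀*θ₁ = (2*p*q)^2 by rw [← hp2, ← hq2]; ring,
      Real.sqrt_sq (by positivity)]
    rw [← hp2, ← hq2]; ring
  have hsz : ss θ₀ θ₁ c 0 = p + q := by
    unfold ss; rw [hxz, Real.sqrt_sq (by positivity)]
  have hdz : dd θ₀ θ₁ c 0 = q - p := by
    unfold dd
    rw [hsz, ee_zero, div_eq_iff (by positivity), ← hp2, ← hq2]; ring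
  constructor
  · unfold AA; rw [hsz, hdz]; ring
  · unfold BB; rw [hsz, hdz]; ring
end zero

set_option maxHeartbeats 2000000 in
/-- For every small `ε` the algebraic system `F₁(ε;·) = F₂(ε;·) = F₃(ε;·) = 0` has a
unique solution near `(D₁*, D₂*, P₀*)`, depending smoothly on `ε`. -/
theorem stmt2 (θ₀ θ₁ c : ℝ) (h0 : 0 < θ₀) (h01 : θ₀ < θ₁) :
    ∃ ε₀ > (0 : ℝ), ∃ U : Set (ℝ × ℝ × ℝ), IsOpen U ∧
      (θ₁ ^ ((3 : ℝ)/2) - θ₀ ^ ((3 : ℝ)/2), θ₀ ^ ((3 : ℝ)/2),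
        (θ₁ ^ ((3 : ℝ)/2) - θ₀ ^ ((3 : ℝ)/2)) /
          (3 * (θ₁ ^ ((1 : ℝ)/2) - θ₀ ^ ((1 : ℝ)/2)))) ∈ U ∧
      ∃ φ : ℝ → ℝ × ℝ × ℝ,
        ContDiffOn ℝ (⊤ : ℕ∞) φ (Ioo (-ε₀) ε₀) ∧
        φ 0 = (θ₁ ^ ((3 : ℝ)/2) - θ₀ ^ ((3 : ℝ)/2), θ₀ ^ ((3 : ℝ)/2),
          (θ₁ ^ ((3 : ℝ)/2) - θ₀ ^ ((3 : ℝ)/2)) /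
            (3 * (θ₁ ^ ((1 : ℝ)/2) - θ₀ ^ ((1 : ℝ)/2)))) ∧
        ∀ ε ∈ Ioo (-ε₀) ε₀,
          φ ε ∈ U ∧
          (∀ d : ℝ × ℝ × ℝ, d ∈ U →
            ((F1 θ₀ c ε d.1 d.2.1 d.2.2 = 0 ∧ F2 θ₁ c ε d.1 d.2.1 d.2.2 = 0 ∧
              F3 d.1 d.2.1 d.2.2 = 0) ↔ d = φ ε)) := by
  have hT : 0 < θ₀ + θ₁ := by linarith
  have h1 : 0 < θ₁ := by linarith
  set p := Real.sqrt θ₀ with hpdef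
  set q := Real.sqrt θ₁ with hqdef
  have hp2 : p^2 = θ₀ := Real.sq_sqrt h0.le
  have hq2 : q^2 = θ₁ := Real.sq_sqrt h1.le
  have hppos : 0 < p := Real.sqrt_pos.2 h0
  have hqpos : 0 < q := Real.sqrt_pos.2 h1
  have hpq : p < q := Real.sqrt_lt_sqrt h0.le h01
  obtain ⟨hA0, hB0⟩ := AB_zero (c := c) h0 h01
  -- the target base point
  have h32₀ : θ₀ ^ ((3:ℝ)/2) = p^3 := threeHalves h0.le
  have h32₁ : θ₁ ^ ((3:ℝ)/2) = q^3 := threeHalves h1.le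
  -- the open set U
  set f : ℝ × ℝ × ℝ → ℝ := fun d => d.2.1 ^ ((1:ℝ)/3) + (d.1 + d.2.1) ^ ((1:ℝ)/3)
    with hfdef
  have hfcont : Continuous f := by
    apply Continuous.add
    · exact (Real.continuous_rpow_const (by norm_num)).comp
        (continuous_fst.comp continuous_snd)
    · exact (Real.continuous_rpow_const (by norm_num)).comp
        (continuous_fst.add (continuous_fst.comp continuous_snd))
  set U : Set (ℝ × ℝ × ℝ) :=
    {d | 0 < d.1} ∩ ({d | 0 < d.2.1} ∩ {d | Real.sqrt (θ₀+θ₁) < f d}) with hUdef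
  have hUopen : IsOpen U := by
    refine IsOpen.inter (isOpen_lt continuous_const continuous_fst) (IsOpen.inter ?_ ?_)
    · exact isOpen_lt continuous_const (continuous_fst.comp continuous_snd)
    · exact isOpen_lt continuous_const hfcont
  -- base point in U
  have hbase : (θ₁ ^ ((3 : ℝ)/2) - θ₀ ^ ((3 : ℝ)/2), θ₀ ^ ((3 : ℝ)/2),
      (θ₁ ^ ((3 : ℝ)/2) - θ₀ ^ ((3 : ℝ)/2)) /
        (3 * (θ₁ ^ ((1 : ℝ)/2) - θ₀ ^ ((1 : ℝ)/2)))) ∈ U := by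
    simp only [hUdef, Set.mem_inter_iff, Set.mem_setOf_eq, hfdef, h32₀, h32₁]
    refine ⟨by nlinarith [pow_lt_pow_left₀ hpq hppos.le (three_ne_zero)], by positivity, ?_⟩
    rw [show q^3 - p^3 + p^3 = q^3 by ring, cubeRoot_cube hppos.le, cubeRoot_cube hqpos.le,
      Real.sqrt_lt' (by positivity)]
    nlinarith [mul_pos hppos hqpos]
  -- value of phi at 0
  have hφ0 : phi θ₀ θ₁ c 0 = (θ₁ ^ ((3 : ℝ)/2) - θ₀ ^ ((3 : ℝ)/2), θ₀ ^ ((3 : ℝ)/2),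
      (θ₁ ^ ((3 : ℝ)/2) - θ₀ ^ ((3 : ℝ)/2)) /
        (3 * (θ₁ ^ ((1 : ℝ)/2) - θ₀ ^ ((1 : ℝ)/2)))) := by
    simp only [phi, hA0, hB0, h32₀, h32₁, half_sqrt, ← hpdef, ← hqdef, Prod.mk.injEq]
    refine ⟨trivial, trivial, ?_⟩
    rw [div_eq_div_iff (by norm_num) (by nlinarith)]
    ring
  -- eventual conditions
  have he0 : ee c 0 ≠ 0 := by rw [ee_zero]; norm_num
  have hi0 : (0:ℝ) < inr θ₀ θ₁ c 0 := by rw [inr_zero]; positivity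
  have hev1 : ∀ᶠ ε in nhds (0:ℝ), 0 < ee c ε :=
    Filter.Tendsto.eventually_const_lt (by rw [ee_zero]; norm_num)
      (cd_ee (c := c) (ε := 0)).continuousAt
  have hev2 : ∀ᶠ ε in nhds (0:ℝ), 0 < inr θ₀ θ₁ c ε :=
    Filter.Tendsto.eventually_const_lt hi0 (cd_inr he0).continuousAt
  have hev3 : ∀ᶠ ε in nhds (0:ℝ), 0 < AA θ₀ θ₁ c ε :=
    Filter.Tendsto.eventually_const_lt (by rw [hA0]; exact hppos)
      (cd_AA hT he0 hi0.ne').continuousAt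
  obtain ⟨ε₀, hε₀pos, hball⟩ := Metric.eventually_nhds_iff.mp (hev1.and (hev2.and hev3))
  have hgood : ∀ ε ∈ Ioo (-ε₀) ε₀,
      0 < ee c ε ∧ 0 < inr θ₀ θ₁ c ε ∧ 0 < AA θ₀ θ₁ c ε := by
    intro ε hε
    exact hball (by rw [Real.dist_eq, sub_zero, abs_lt]; exact ⟨hε.1, hε.2⟩)
  refine ⟨ε₀, hε₀pos, U, hUopen, hbase, phi θ₀ θ₁ c, ?_, hφ0, ?_⟩
  · intro ε hε
    exact (cd_phi hT (hgood ε hε).1.ne' (hgood ε hε).2.1.ne').contDiffWithinAt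
  intro ε hε
  obtain ⟨hee, hinr, hApos⟩ := hgood ε hε
  obtain ⟨hE1, hE2⟩ := main_eqs hT hee hinr
  set a := AA θ₀ θ₁ c ε with hadef
  set b := BB θ₀ θ₁ c ε with hbdef
  have hdpos : 0 < dd θ₀ θ₁ c ε := dd_pos hT h01 hee
  have hba : b - a = dd θ₀ θ₁ c ε := by rw [hadef, hbdef]; unfold AA BB; ring
  have hsab : a + b = ss θ₀ θ₁ c ε := by rw [hadef, hbdef]; unfold AA BB; ring
  have hab : a < b := by linarith
  have hBpos : 0 < b := by linarith
  have hQpos : 0 < a^2 + a*b + b^2 := by positivity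
  have ha3b3 : a^3 < b^3 := pow_lt_pow_left₀ hab hApos.le three_ne_zero
  have hD1ne : b^3 - a^3 ≠ 0 := by linarith
  -- phi ε ∈ U
  have hphiU : phi θ₀ θ₁ c ε ∈ U := by
    simp only [hUdef, Set.mem_inter_iff, Set.mem_setOf_eq, phi, ← hadef, ← hbdef, hfdef]
    refine ⟨by linarith, by positivity, ?_⟩
    rw [show b^3 - a^3 + a^3 = b^3 by ring, cubeRoot_cube hApos.le, cubeRoot_cube hBpos.le,
      hsab]
    exact Real.sqrt_lt_sqrt hT.le (xx_gt hT hinr)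
  -- phi ε solves the system
  have h2a : (a^3 : ℝ) ^ ((2:ℝ)/3) = a^2 := by
    rw [twoThirds_sq (by positivity), cubeRoot_cube hApos.le]
  have h2b : (b^3 : ℝ) ^ ((2:ℝ)/3) = b^2 := by
    rw [twoThirds_sq (by positivity), cubeRoot_cube hBpos.le]
  have hsolve : F1 θ₀ c ε (phi θ₀ θ₁ c ε).1 (phi θ₀ θ₁ c ε).2.1 (phi θ₀ θ₁ c ε).2.2 = 0 ∧
      F2 θ₁ c ε (phi θ₀ θ₁ c ε).1 (phi θ₀ θ₁ c ε).2.1 (phi θ₀ θ₁ c ε).2.2 = 0 ∧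
      F3 (phi θ₀ θ₁ c ε).1 (phi θ₀ θ₁ c ε).2.1 (phi θ₀ θ₁ c ε).2.2 = 0 := by
    simp only [phi, ← hadef, ← hbdef]
    refine ⟨?_, ?_, ?_⟩
    · unfold F1
      rw [h2a, cubeRoot_cube hApos.le, show 3*((a^2+a*b+b^2)/3) = a^2+a*b+b^2 by ring]
      field_simp
      linear_combination (a^2+a*b+b^2) * hE1
    · unfold F2
      rw [show b^3 - a^3 + a^3 = b^3 by ring, h2b, cubeRoot_cube hBpos.le,
        show 3*((a^2+a*b+b^2)/3) = a^2+a*b+b^2 by ring]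
      field_simp
      linear_combination (a^2+a*b+b^2) * hE2
    · unfold F3
      rw [show b^3 - a^3 + a^3 = b^3 by ring, cubeRoot_cube hApos.le, cubeRoot_cube hBpos.le,
        show 3*((a^2+a*b+b^2)/3) = a^2+a*b+b^2 by ring]
      field_simp
      ring
  refine ⟨hphiU, ?_⟩
  intro d hdU
  constructor
  · -- uniqueness
    rintro ⟨hf1, hf2, hf3⟩
    simp only [hUdef, Set.mem_inter_iff, Set.mem_setOf_eq, hfdef] at hdU
    obtain ⟨hd1, hd2, hd3⟩ := hdU
    have hD12 : 0 < d.1 + d.2.1 := by linarith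
    set a' := d.2.1 ^ ((1:ℝ)/3) with ha'def
    set b' := (d.1 + d.2.1) ^ ((1:ℝ)/3) with hb'def
    have ha'pos : 0 < a' := Real.rpow_pos_of_pos hd2 _
    have hb'pos : 0 < b' := Real.rpow_pos_of_pos hD12 _
    have ha3 : a'^3 = d.2.1 := cube_cubeRoot hd2.le
    have hb3 : b'^3 = d.1 + d.2.1 := cube_cubeRoot hD12.le
    have hab' : a' < b' := by
      by_contra h
      push_neg at h
      have := pow_le_pow_left₀ hb'pos.le h 3
      rw [ha3, hb3] at this; linarith
    have hu : 0 < b' - a' := by linarith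
    -- F3 gives the value of P₀
    have hP : 3*d.2.2*(b' - a') = d.1 := by
      unfold F3 at hf3
      rw [← ha'def, ← hb'def] at hf3
      have h' : 3*d.2.2/d.1*(b' - a') = 1 := by linarith
      field_simp [hd1.ne'] at h'
      linear_combination h'
    have hPpos : 0 < d.2.2 := by
      have h5 : 0 < 3*d.2.2*(b'-a') := by rw [hP]; exact hd1
      rcases mul_pos_iff.mp h5 with ⟨h6, _⟩ | ⟨_, h7⟩
      · linarith
      · linarith
    -- F1, F2 reduce to the two quadratic equations
    have hE1' : a'^2 - θ₀ - 2*c*ε*(b' - a')*a' = 0 := by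
      unfold F1 at hf1
      rw [twoThirds_sq hd2.le, ← ha'def] at hf1
      have h3P : (3*d.2.2) ≠ 0 := by positivity
      field_simp [h3P] at hf1
      have key : (a'^2 - θ₀ - 2*c*ε*(b' - a')*a')*(3*d.2.2) = 0 := by
        linear_combination hf1 - 2*c*ε*a'*hP
      rcases mul_eq_zero.mp key with h | h
      · exact h
      · exact absurd h h3P
    have hE2' : b'^2 - θ₁ + 2*c*ε*(b' - a')*b' = 0 := by
      unfold F2 at hf2
      rw [twoThirds_sq hD12.le, ← hb'def] at hf2
      have h3P : (3*d.2.2) ≠ 0 := by positivity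
      field_simp [h3P] at hf2
      have key : (b'^2 - θ₁ + 2*c*ε*(b' - a')*b')*(3*d.2.2) = 0 := by
        linear_combination hf2 + 2*c*ε*b'*hP
      rcases mul_eq_zero.mp key with h | h
      · exact h
      · exact absurd h h3P
    have hene : (1 + 2*c*ε) ≠ 0 := by unfold ee at hee; exact hee.ne'
    have h_diff : (a'+b')*(b'-a')*(1+2*c*ε) = θ₁-θ₀ := by
      linear_combination hE2' - hE1'
    have h_sum : a'^2 + b'^2 + 2*c*ε*(b'-a')^2 = θ₀+θ₁ := by
      linear_combination hE1' + hE2'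
    have hyT : θ₀+θ₁ < (a'+b')^2 := by
      have h2 := pow_lt_pow_left₀ hd3 (Real.sqrt_nonneg _) two_ne_zero
      rw [Real.sq_sqrt hT.le] at h2
      exact h2
    have hR2 : (θ₁-θ₀)^2 = (a'+b')^2*(b'-a')^2*(1+2*c*ε)^2 := by
      linear_combination (-(θ₁-θ₀) - (a'+b')*(b'-a')*(1+2*c*ε))*h_diff
    have key2 : ((a'+b')^2 - (θ₀+θ₁))^2 = inr θ₀ θ₁ c ε := by
      unfold inr ee
      have he2 : (1+2*c*ε)^2 ≠ 0 := pow_ne_zero 2 hene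
      rw [eq_sub_iff_add_eq, add_div' _ _ _ he2, div_eq_iff he2]
      linear_combination (1+4*c*ε)*hR2 + 2*(1+2*c*ε)^2*(a'+b')^2*h_sum
    have hsqrt : Real.sqrt (inr θ₀ θ₁ c ε) = (a'+b')^2 - (θ₀+θ₁) := by
      rw [← key2, Real.sqrt_sq (by linarith)]
    have hxeq : xx θ₀ θ₁ c ε = (a'+b')^2 := by unfold xx; rw [hsqrt]; ring
    have hseq : ss θ₀ θ₁ c ε = a'+b' := by
      unfold ss; rw [hxeq, Real.sqrt_sq (by positivity)]
    have hdeq : dd θ₀ θ₁ c ε = b'-a' := by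
      unfold dd ee
      rw [hseq, div_eq_iff (by positivity)]
      linear_combination -h_diff
    have haa' : a = a' := by rw [hadef]; unfold AA; rw [hseq, hdeq]; ring
    have hbb' : b = b' := by rw [hbdef]; unfold BB; rw [hseq, hdeq]; ring
    have hd2eq : d.2.2 = (a'^2 + a'*b' + b'^2)/3 := by
      rw [eq_div_iff (by norm_num : (3:ℝ) ≠ 0)]
      apply mul_right_cancel₀ hu.ne'
      linear_combination hP - hb3 + ha3
    have : phi θ₀ θ₁ c ε = (b'^3 - a'^3, a'^3, (a'^2 + a'*b' + b'^2)/3) := by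
      simp only [phi, ← hadef, ← hbdef, haa', hbb']
    rw [this, Prod.ext_iff, Prod.ext_iff]
    exact ⟨by simp; linarith, by simp [← ha3], by simp [hd2eq]⟩
  · rintro rfl
    exact hsolve
end
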